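/- arXiv:2302.05470 — 6 statements merged into one kernel-verified Lean document; each statement's English description precedes it below -/
import Mathlib

section
/- For a real number k > 1 and a positive integer n, the number of integers c with floor(c/k) = n equals floor(k) if the fractional part of n*k lies in the interval (0, 1 - frac(k)], and equals ceil(k) otherwise. -/
/-- For `k > 1` real and a positive integer `n`, the number of integers `c` with
`⌊c / k⌋ = n` equals `⌊k⌋` if `frac (n * k) ∈ (0, 1 - frac k]`, and `⌈k⌉` otherwise. -/
theorem stmt_1 (k : ℝ) (hk : 1 < k) (n : ℕ) (hn : 0 < n) :
    ({c : ℕ | ⌊(c : ℝ) / k⌋ = (n : ℤ)}.ncard : ℤ) =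
      if Int.fract ((n : ℝ) * k) ∈ Set.Ioc (0 : ℝ) (1 - Int.fract k) then ⌊k⌋ else ⌈k⌉ := by
  have hk0 : (0:ℝ) < k := by linarith
  set a : ℝ := (n:ℝ) * k with ha
  have ha1 : 1 ≤ a := by
    have h1 : (1:ℝ) ≤ (n:ℝ) := by exact_mod_cast hn
    nlinarith
  have hca : 1 ≤ ⌈a⌉ := by
    rw [Int.le_ceil_iff]; push_cast; linarith
  have hcab : ⌈a⌉ ≤ ⌈a + k⌉ := Int.ceil_le_ceil (by linarith)
  have hset : {c : ℕ | ⌊(c : ℝ) / k⌋ = (n : ℤ)} =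
      ↑(Finset.Ico (⌈a⌉.toNat) (⌈a + k⌉.toNat)) := by
    ext c
    simp only [Set.mem_setOf_eq, Finset.coe_Ico, Set.mem_Ico]
    rw [Int.floor_eq_iff]
    constructor
    · rintro ⟨h1, h2⟩
      rw [le_div_iff₀ hk0] at h1
      rw [div_lt_iff₀ hk0] at h2
      push_cast at h1 h2
      constructor
      · rw [Int.toNat_le, Int.ceil_le]
        push_cast; linarith [ha]
      · rw [Int.lt_toNat, Int.lt_ceil]
        push_cast; linarith [ha]
    · rintro ⟨h1, h2⟩
      rw [Int.toNat_le, Int.ceil_le] at h1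
      rw [Int.lt_toNat, Int.lt_ceil] at h2
      push_cast at h1 h2
      constructor
      · rw [le_div_iff₀ hk0]; push_cast; linarith [ha]
      · rw [div_lt_iff₀ hk0]; push_cast; linarith [ha]
  rw [hset, Set.ncard_coe_finset, Nat.card_Ico]
  have hcast : ((⌈a + k⌉.toNat - ⌈a⌉.toNat : ℕ) : ℤ) = ⌈a + k⌉ - ⌈a⌉ := by
    omega
  rw [hcast]
  -- arithmetic part
  have hfk0 : 0 ≤ Int.fract k := Int.fract_nonneg k
  have hfk1 : Int.fract k < 1 := Int.fract_lt_one k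
  have hfa0 : 0 ≤ Int.fract a := Int.fract_nonneg a
  have hfa1 : Int.fract a < 1 := Int.fract_lt_one a
  have hfadef : Int.fract a = a - ⌊a⌋ := rfl
  have hfkdef : Int.fract k = k - ⌊k⌋ := rfl
  by_cases h : Int.fract a ∈ Set.Ioc (0 : ℝ) (1 - Int.fract k)
  · rw [if_pos h]
    obtain ⟨hg0, hg1⟩ := h
    have h1 : ⌈a⌉ = ⌊a⌋ + 1 := by
      rw [Int.ceil_eq_iff]
      push_cast
      constructor <;> linarith
    have h2 : ⌈a + k⌉ = ⌊a⌋ + ⌊k⌋ + 1 := by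
      rw [Int.ceil_eq_iff]
      push_cast
      constructor <;> linarith
    rw [h1, h2]; ring
  · rw [if_neg h]
    simp only [Set.mem_Ioc, not_and_or, not_lt, not_le] at h
    rcases h with h | h
    · -- fract a = 0
      have hg : Int.fract a = 0 := le_antisymm h hfa0
      have h1 : ⌈a⌉ = ⌊a⌋ := by
        rw [Int.ceil_eq_iff]
        constructor <;> push_cast <;> linarith
      have h2 : ⌈a + k⌉ = ⌊a⌋ + ⌈k⌉ := by
        have h3 : a + k = k + (⌊a⌋ : ℝ) := by linarith
        rw [h3, Int.ceil_add_intCast]; ring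
      rw [h1, h2]; ring
    · -- fract a > 1 - fract k
      have hfk0' : 0 < Int.fract k := by linarith
      have hck : ⌈k⌉ = ⌊k⌋ + 1 := by
        rw [Int.ceil_eq_iff]
        push_cast
        constructor <;> linarith
      have h1 : ⌈a⌉ = ⌊a⌋ + 1 := by
        rw [Int.ceil_eq_iff]
        push_cast
        constructor <;> linarith
      have h2 : ⌈a + k⌉ = ⌊a⌋ + ⌊k⌋ + 2 := by
        rw [Int.ceil_eq_iff]
        push_cast
        constructor <;> linarith
      rw [h1, h2, hck]; ring
end

section
/- For a real number k > 1, define f_0 = 1 and f_{i+1} = ceil(k * f_i). Then the limit c(k) = lim_{i→∞} f_i / k^i exists, and satisfies 1 ≤ c(k) ≤ k/(k-1). -/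
open Filter

/-- For `k > 1`, with `f 0 = 1` and `f (i+1) = ⌈k * f i⌉`, the limit
`c(k) = lim f i / k ^ i` exists and satisfies `1 ≤ c(k) ≤ k / (k - 1)`. -/
theorem stmt_6 (k : ℝ) (hk : 1 < k) (f : ℕ → ℤ) (hf0 : f 0 = 1)
    (hf : ∀ i, f (i + 1) = ⌈k * (f i : ℝ)⌉) :
    ∃ c : ℝ, Tendsto (fun i : ℕ => (f i : ℝ) / k ^ i) atTop (nhds c) ∧
      1 ≤ c ∧ c ≤ k / (k - 1) := by
  have hk0 : (0:ℝ) < k := lt_trans one_pos hk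
  have hk1 : (0:ℝ) < k - 1 := by linarith
  set g : ℕ → ℝ := fun i => (f i : ℝ) / k ^ i with hg
  have hgpow : ∀ i, (0:ℝ) < k ^ i := fun i => pow_pos hk0 i
  have hstep_ge : ∀ i, k * (f i : ℝ) ≤ (f (i+1) : ℝ) := by
    intro i; rw [hf i]; exact_mod_cast Int.le_ceil _
  have hstep_le : ∀ i, (f (i+1) : ℝ) ≤ k * (f i : ℝ) + 1 := by
    intro i; rw [hf i]
    have := Int.ceil_lt_add_one (k * (f i : ℝ))
    linarith
  have hmono : Monotone g := by
    apply monotone_nat_of_le_succ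
    intro i
    have h1 := hstep_ge i
    rw [hg]
    simp only
    rw [div_le_div_iff₀ (hgpow i) (hgpow (i+1))]
    calc (f i : ℝ) * k ^ (i+1) = (k * (f i : ℝ)) * k ^ i := by ring
      _ ≤ (f (i+1) : ℝ) * k ^ i := mul_le_mul_of_nonneg_right h1 (hgpow i).le
  have hbound : ∀ i, g i ≤ k / (k - 1) - (1 / (k - 1)) * (1 / k) ^ i := by
    intro i
    induction i with
    | zero =>
      simp [hg, hf0]
      have : k / (k-1) = 1 + (k-1)⁻¹ := by field_simp; ring
      rw [this]
      have : (0:ℝ) < (k-1)⁻¹ := by positivity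
      linarith
    | succ n ih =>
      have h2 := hstep_le n
      have hgs : g (n+1) ≤ g n + (1/k)^(n+1) := by
        have heq : g n + (1/k)^(n+1) = (k * (f n : ℝ) + 1) / k^(n+1) := by
          rw [hg]; simp only; rw [div_pow, one_pow, pow_succ]; field_simp
        rw [heq, hg]; simp only
        gcongr
      have key : (1/k)^(n+1) + (1/(k-1)) * (1/k)^(n+1) = (1/(k-1)) * (1/k)^n := by
        have : (1/k:ℝ)^(n+1) = (1/k)^n * (1/k) := pow_succ _ _
        rw [this]
        field_simp
        ring
      calc g (n+1) ≤ g n + (1/k)^(n+1) := hgs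
        _ ≤ k / (k - 1) - (1/(k-1)) * (1/k) ^ n + (1/k)^(n+1) := by linarith
        _ = k / (k - 1) - (1/(k-1)) * (1/k) ^ (n+1) := by
            rw [← key]; ring
  have hbdd : BddAbove (Set.range g) := by
    refine ⟨k / (k - 1), ?_⟩
    rintro x ⟨i, rfl⟩
    have h := hbound i
    have hp : (0:ℝ) ≤ (1/(k-1)) * (1/k)^i := by positivity
    linarith
  have htend : Tendsto g atTop (nhds (⨆ i, g i)) := tendsto_atTop_ciSup hmono hbdd
  refine ⟨⨆ i, g i, htend, ?_, ?_⟩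
  · have h0 : g 0 = 1 := by simp [hg, hf0]
    have := le_ciSup hbdd 0
    rw [h0] at this
    exact this
  · apply ciSup_le
    intro i
    have h := hbound i
    have hp : (0:ℝ) ≤ (1/(k-1)) * (1/k)^i := by positivity
    linarith
end

section
/- For a real number k > 1, define f_0 = 1, f_{i+1} = ceil(k * f_i), and r_d = f_d - f_{d-1} for d ≥ 1. Then the limit ρ(k) = lim_{d→∞} r_d / k^d exists and equals (k-1)/k times lim_{i→∞} f_i / k^i. -/
open Filter

/-- For `k > 1`, with `f 0 = 1`, `f (i+1) = ⌈k * f i⌉`, and `r d = f d - f (d-1)` for `d ≥ 1`,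
the limit `ρ(k) = lim r d / k ^ d` exists and equals `(k-1)/k` times `lim f i / k ^ i`. -/
theorem stmt_7 (k : ℝ) (hk : 1 < k) (f : ℕ → ℤ) (hf0 : f 0 = 1)
    (hf : ∀ i, f (i + 1) = ⌈k * (f i : ℝ)⌉)
    (r : ℕ → ℤ) (hr : ∀ d : ℕ, 1 ≤ d → r d = f d - f (d - 1)) :
    ∃ c : ℝ, Tendsto (fun i : ℕ => (f i : ℝ) / k ^ i) atTop (nhds c) ∧
      Tendsto (fun d : ℕ => (r d : ℝ) / k ^ d) atTop (nhds ((k - 1) / k * c)) := by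
  have hk0 : (0:ℝ) < k := lt_trans one_pos hk
  have hk1 : (0:ℝ) < k - 1 := by linarith
  set g : ℕ → ℝ := fun i => (f i : ℝ) / k ^ i with hg
  have hpow : ∀ i : ℕ, (0:ℝ) < k ^ i := fun i => pow_pos hk0 i
  have hmono : Monotone g := by
    apply monotone_nat_of_le_succ
    intro i
    have h1 : k * (f i : ℝ) ≤ (f (i+1) : ℝ) := by
      rw [hf i]; exact Int.le_ceil _
    have heq : (f i : ℝ) / k ^ i = (k * (f i : ℝ)) / k ^ (i+1) := by
      rw [pow_succ', mul_div_mul_left _ _ hk0.ne']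
    show (f i : ℝ) / k ^ i ≤ (f (i+1) : ℝ) / k ^ (i+1)
    rw [heq]
    exact div_le_div_of_nonneg_right h1 (hpow (i+1)).le
  have hstep : ∀ n : ℕ, g (n+1) ≤ g n + (1/k) ^ (n+1) := by
    intro n
    have h1 : (f (n+1) : ℝ) < k * (f n : ℝ) + 1 := by
      rw [hf n]; exact Int.ceil_lt_add_one _
    have : (f (n+1) : ℝ) / k ^ (n+1) ≤ (k * (f n : ℝ) + 1) / k ^ (n+1) :=
      div_le_div_of_nonneg_right h1.le (hpow (n+1)).le
    refine this.trans_eq ?_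
    rw [div_pow, one_pow, pow_succ']
    rw [eq_comm, div_add_div _ _ (hpow n).ne' (by positivity : (k*k^n:ℝ) ≠ 0)]
    rw [div_eq_div_iff (by positivity) (by positivity)]
    ring
  have hbound' : ∀ n : ℕ, g n ≤ 1 + (1 - (1/k)^n) / (k-1) := by
    intro n
    induction n with
    | zero => simp [hg, hf0]
    | succ n ih =>
      have := hstep n
      have key : 1 + (1 - (1/k)^n) / (k-1) + (1/k)^(n+1)
          = 1 + (1 - (1/k)^(n+1)) / (k-1) := by
        have hkne : k ≠ 0 := ne_of_gt hk0
        have hk1ne : k - 1 ≠ 0 := ne_of_gt hk1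
        field_simp
        linear_combination (1/k)^n * (mul_one_div_cancel hkne)
      linarith [this, ih]
  have hbdd : BddAbove (Set.range g) := by
    refine ⟨1 + 1/(k-1), ?_⟩
    rintro x ⟨n, rfl⟩
    have h1 : (0:ℝ) ≤ (1/k)^n := le_of_lt (pow_pos (by positivity) n)
    have := hbound' n
    have h2 : (1 - (1/k)^n) / (k-1) ≤ 1/(k-1) := by
      apply div_le_div_of_nonneg_right _ hk1.le
      linarith
    linarith
  set c := ⨆ i, g i with hc
  have htend : Tendsto g atTop (nhds c) := tendsto_atTop_ciSup hmono hbdd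
  refine ⟨c, htend, ?_⟩
  have hshift : Tendsto (fun d : ℕ => g (d-1)) atTop (nhds c) :=
    htend.comp (tendsto_sub_atTop_nat 1)
  have hcomb : Tendsto (fun d : ℕ => g d - (1/k) * g (d-1)) atTop
      (nhds ((k-1)/k * c)) := by
    have := htend.sub (hshift.const_mul (1/k))
    convert this using 2
    field_simp
  refine hcomb.congr' ?_
  refine eventually_atTop.2 ⟨1, fun d hd => ?_⟩
  have hd1 : d - 1 + 1 = d := Nat.succ_pred_eq_of_pos hd
  show g d - 1 / k * g (d - 1) = (r d : ℝ) / k ^ d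
  rw [hr d hd]
  push_cast
  rw [hg]
  simp only
  have hkd : k ^ d = k * k ^ (d-1) := by
    conv_lhs => rw [← hd1, pow_succ']
  rw [hkd]
  field_simp
end

section
/- For a real number k > 1, the number r_d of natural numbers at depth d in the k-descending tree satisfies (k-1)/k ≤ lim_{d→∞} r_d / k^d ≤ 1, where the limit exists. -/
open Filter

/-- Parent function of the `k`-descending tree. -/
noncomputable def par (k : ℝ) (n : ℕ) : ℕ := (⌊(n : ℝ) / k⌋).toNat

/-- Depth of a node: number of iterations of `m ↦ ⌊m / k⌋` needed to reach the root `0`. -/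
noncomputable def depth (k : ℝ) (n : ℕ) : ℕ := sInf {d : ℕ | (par k)^[d] n = 0}

/-- Number of nodes at depth `d` in the `k`-descending tree. -/
noncomputable def row (k : ℝ) (d : ℕ) : ℕ := {n : ℕ | depth k n = d}.ncard

/-- The boundary sequence: `bseq k d` is the number of nodes of depth `≤ d`. -/
noncomputable def bseq (k : ℝ) : ℕ → ℕ
  | 0 => 1
  | d + 1 => ⌈k * bseq k d⌉₊

lemma bseq_pos (k : ℝ) (hk : 1 < k) (d : ℕ) : 0 < bseq k d := by
  induction d with
  | zero => simp [bseq]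
  | succ d ih =>
    simp only [bseq]
    rw [Nat.ceil_pos]
    positivity

lemma iterate_eq_zero_iff (k : ℝ) (hk : 1 < k) (d n : ℕ) :
    (par k)^[d] n = 0 ↔ n < bseq k d := by
  induction d generalizing n with
  | zero => simp [bseq, Nat.lt_one_iff]
  | succ d ih =>
    rw [Function.iterate_succ_apply, ih]
    have hb := bseq_pos k hk d
    have hk0 : (0:ℝ) < k := lt_trans one_pos hk
    show (⌊(n : ℝ) / k⌋).toNat < bseq k d ↔ n < bseq k (d + 1)
    rw [Int.toNat_lt' hb, Int.floor_lt, div_lt_iff₀ hk0]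
    simp only [bseq]
    rw [← Nat.lt_ceil]
    push_cast
    rw [mul_comm]

lemma bseq_lt_succ (k : ℝ) (hk : 1 < k) (d : ℕ) : bseq k d < bseq k (d + 1) := by
  have hb := bseq_pos k hk d
  have h1 : (bseq k d : ℝ) < k * bseq k d := by
    have hb1 : (1:ℝ) ≤ (bseq k d : ℝ) := by exact_mod_cast hb
    nlinarith
  have h2 : (bseq k d : ℝ) < (⌈k * bseq k d⌉₊ : ℝ) :=
    lt_of_lt_of_le h1 (Nat.le_ceil _)
  exact_mod_cast h2

lemma bseq_mono (k : ℝ) (hk : 1 < k) : Monotone (bseq k) :=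
  monotone_nat_of_le_succ fun d => (bseq_lt_succ k hk d).le

lemma depth_set_eq (k : ℝ) (hk : 1 < k) (d : ℕ) :
    {n : ℕ | depth k n = d + 1} = Set.Ico (bseq k d) (bseq k (d + 1)) := by
  ext n
  simp only [Set.mem_setOf_eq, Set.mem_Ico]
  have hS : {e : ℕ | (par k)^[e] n = 0} = {e : ℕ | n < bseq k e} := by
    ext e; exact iterate_eq_zero_iff k hk e n
  rw [depth, hS]
  constructor
  · intro h
    have hne : {e : ℕ | n < bseq k e}.Nonempty := by
      by_contra hc
      rw [Set.not_nonempty_iff_eq_empty] at hc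
      rw [hc] at h
      simp [Nat.sInf_empty] at h
    have hmem := Nat.sInf_mem hne
    rw [h] at hmem
    refine ⟨?_, hmem⟩
    by_contra hc
    push_neg at hc
    have : d ∈ {e : ℕ | n < bseq k e} := hc
    have := Nat.sInf_le this
    omega
  · rintro ⟨h1, h2⟩
    have hmem : d + 1 ∈ {e : ℕ | n < bseq k e} := h2
    refine le_antisymm (Nat.sInf_le hmem) ?_
    by_contra hc
    push_neg at hc
    have hle : sInf {e : ℕ | n < bseq k e} ≤ d := by omega
    have := Nat.sInf_mem ⟨d + 1, hmem⟩
    have h3 : n < bseq k (sInf {e : ℕ | n < bseq k e}) := this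
    have h4 : bseq k (sInf {e : ℕ | n < bseq k e}) ≤ bseq k d := bseq_mono k hk hle
    omega

lemma row_succ (k : ℝ) (hk : 1 < k) (d : ℕ) :
    row k (d + 1) = bseq k (d + 1) - bseq k d := by
  rw [row, depth_set_eq k hk d, ← Finset.coe_Ico, Set.ncard_coe_finset, Nat.card_Ico]

/-- For `k > 1`, the limit `lim r_d / k ^ d` exists and lies in `[(k-1)/k, 1]`. -/
theorem stmt_8 (k : ℝ) (hk : 1 < k) :
    ∃ L : ℝ, Tendsto (fun d : ℕ => (row k d : ℝ) / k ^ d) atTop (nhds L) ∧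
      (k - 1) / k ≤ L ∧ L ≤ 1 := by
  have hk0 : (0:ℝ) < k := lt_trans one_pos hk
  set g : ℕ → ℝ := fun d => (bseq k d : ℝ) / k ^ d with hg
  have hgmono : Monotone g := by
    apply monotone_nat_of_le_succ
    intro d
    have h1 : k * bseq k d ≤ (bseq k (d + 1) : ℝ) := by
      simpa [bseq] using Nat.le_ceil (k * bseq k d)
    have hp : (0:ℝ) < k ^ d := pow_pos hk0 d
    have hp1 : (0:ℝ) < k ^ (d + 1) := pow_pos hk0 (d + 1)
    rw [hg]
    rw [div_le_div_iff₀ hp hp1]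
    calc (bseq k d : ℝ) * k ^ (d + 1) = (k * bseq k d) * k ^ d := by ring
      _ ≤ (bseq k (d + 1) : ℝ) * k ^ d := by nlinarith
  have hgupper : ∀ d, g d ≤ (k - (k ^ d)⁻¹) / (k - 1) := by
    intro d
    induction d with
    | zero => simp [hg, bseq, div_self (show k - 1 ≠ 0 by linarith)]
    | succ d ih =>
      have hp : (0:ℝ) < k ^ d := pow_pos hk0 d
      have hp1 : (0:ℝ) < k ^ (d + 1) := pow_pos hk0 (d + 1)
      have h1 : (bseq k (d + 1) : ℝ) < k * bseq k d + 1 := by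
        have := Nat.ceil_lt_add_one (a := k * bseq k d) (by positivity)
        simpa [bseq] using this
      have hstep : g (d + 1) ≤ g d + (k ^ (d + 1))⁻¹ := by
        rw [hg]
        simp only
        have e1 : (bseq k d : ℝ) / k ^ d + (k ^ (d + 1))⁻¹
            = (k * bseq k d + 1) / k ^ (d + 1) := by
          rw [pow_succ]
          field_simp
        rw [e1]
        gcongr
      calc g (d + 1) ≤ g d + (k ^ (d + 1))⁻¹ := hstep
        _ ≤ (k - (k ^ d)⁻¹) / (k - 1) + (k ^ (d + 1))⁻¹ := by linarith [ih]
        _ = (k - (k ^ (d + 1))⁻¹) / (k - 1) := by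
            have hne : k - 1 ≠ 0 := by linarith
            rw [pow_succ]
            field_simp [hp.ne', hk0.ne', hne]
            ring
  have hbdd : BddAbove (Set.range g) := by
    refine ⟨k / (k - 1), ?_⟩
    rintro x ⟨d, rfl⟩
    have := hgupper d
    have hp : (0:ℝ) < (k ^ d)⁻¹ := by positivity
    have h2 : (k - (k ^ d)⁻¹) / (k - 1) ≤ k / (k - 1) := by
      apply div_le_div_of_nonneg_right ?_ (by linarith) |>.trans_eq rfl
      linarith
    exact this.trans h2
  set M : ℝ := ⨆ d, g d with hM
  have hgtend : Tendsto g atTop (nhds M) := tendsto_atTop_ciSup hgmono hbdd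
  have hM1 : 1 ≤ M := by
    have := le_ciSup hbdd 0
    simpa [hg, bseq] using this
  have hMub : M ≤ k / (k - 1) := by
    apply ciSup_le
    intro d
    have := hgupper d
    have hp : (0:ℝ) < (k ^ d)⁻¹ := by positivity
    have : (k - (k ^ d)⁻¹) / (k - 1) ≤ k / (k - 1) := by
      apply div_le_div_of_nonneg_right ?_ (by linarith) |>.trans_eq rfl
      linarith
    linarith [hgupper d]
  refine ⟨M - M / k, ?_, ?_, ?_⟩
  · rw [← tendsto_add_atTop_iff_nat 1]
    have heq : ∀ d : ℕ, (row k (d + 1) : ℝ) / k ^ (d + 1) = g (d + 1) - g d / k := by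
      intro d
      rw [row_succ k hk d]
      have hle := (bseq_lt_succ k hk d).le
      rw [Nat.cast_sub hle, hg]
      simp only
      rw [pow_succ]
      field_simp
    simp only [heq]
    have h1 : Tendsto (fun d : ℕ => g (d + 1)) atTop (nhds M) :=
      (tendsto_add_atTop_iff_nat 1).mpr hgtend
    have h2 : Tendsto (fun d : ℕ => g d / k) atTop (nhds (M / k)) :=
      hgtend.div_const k
    exact h1.sub h2
  · rw [div_le_iff₀ hk0, sub_mul, div_mul_cancel₀ _ hk0.ne']
    nlinarith
  · have h1 : M - M / k = M * (k - 1) / k := by field_simp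
    rw [h1, div_le_one hk0]
    calc M * (k - 1) ≤ (k / (k - 1)) * (k - 1) := by nlinarith
      _ = k := div_mul_cancel₀ k (show k - 1 ≠ 0 by linarith)
end

section
/- Let a, b be integers and k > 1 a real number satisfying k = a + b/k (i.e., k² = a·k + b). Then for any positive integer n with fractional part x = frac(n·k), the i-th smallest child c_i = ceil(n·k) + i - 1 of n in the k-descending tree has fractional part frac(c_i · k) = frac((i - x) · b/k). -/
/-- Rational root of a monic integer quadratic is an integer. -/
lemma rat_root_int (a b : ℤ) (q : ℚ) (h : q ^ 2 = a * q + b) : q.den = 1 := by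
  have hq : (q.num : ℚ) = q * q.den := (Rat.mul_den_eq_num q).symm
  have h2 : (q.num : ℚ) ^ 2 = (a * q.num * q.den + b * q.den ^ 2 : ℤ) := by
    push_cast
    rw [hq]; nlinarith [h]
  have h3 : q.num ^ 2 = a * q.num * q.den + b * q.den ^ 2 := by exact_mod_cast h2
  have hdvd : (q.den : ℤ) ∣ q.num ^ 2 := ⟨a * q.num + b * q.den, by linarith [h3]⟩
  have hcop : Nat.Coprime q.den (q.num.natAbs ^ 2) :=
    (Nat.Coprime.pow_right 2 q.reduced.symm)
  have hd : q.den ∣ q.num.natAbs ^ 2 := by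
    have := Int.natAbs_dvd_natAbs.mpr hdvd
    simpa [Int.natAbs_pow] using this
  exact hcop.eq_one_of_dvd hd

/-- Let `k > 1` satisfy `k² = a·k + b` with `a b : ℤ`. For a positive integer `n` with
count indicator `x = frac (n·k)`, the `i`-th smallest child `cᵢ = ⌈n·k⌉ + i - 1` of `n`
(for `1 ≤ i ≤ h(n)`) has count indicator `frac (cᵢ·k) = frac ((i - x) · b / k)`. -/
theorem stmt_9 (k : ℝ) (hk : 1 < k) (a b : ℤ) (hab : k ^ 2 = a * k + b)
    (n : ℕ) (hn : 0 < n) (i : ℕ) (hi1 : 1 ≤ i)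
    (hih : i ≤ {c : ℕ | ⌊(c : ℝ) / k⌋ = (n : ℤ)}.ncard) :
    Int.fract (((⌈(n : ℝ) * k⌉ + (i : ℤ) - 1 : ℤ) : ℝ) * k) =
      Int.fract (((i : ℝ) - Int.fract ((n : ℝ) * k)) * ((b : ℝ) / k)) := by
  have hk0 : k ≠ 0 := by positivity
  set m : ℤ := ⌈(n : ℝ) * k⌉ + (i : ℤ) - 1 with hm
  -- step 1: frac(m·k) = frac(m·(b/k))
  have hstep : (m : ℝ) * k = ((m * a : ℤ) : ℝ) + (m : ℝ) * ((b : ℝ) / k) := by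
    push_cast
    field_simp
    linear_combination (m : ℝ) * hab
  by_cases hx : Int.fract ((n : ℝ) * k) = 0
  · -- n·k is an integer, hence k is rational, hence an integer, hence b/k ∈ ℤ
    have hnk : (n : ℝ) * k = (⌊(n : ℝ) * k⌋ : ℝ) := by
      have := Int.self_sub_fract ((n : ℝ) * k)
      rw [hx] at this; linarith
    set z : ℤ := ⌊(n : ℝ) * k⌋
    have hn0 : (n : ℝ) ≠ 0 := by positivity
    set q : ℚ := (z : ℚ) / (n : ℚ) with hqdef
    have hkq : k = (q : ℝ) := by
      rw [hqdef]; push_cast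
      field_simp
      linarith [hnk]
    have hq2 : q ^ 2 = a * q + b := by
      have : ((q ^ 2 - a * q - b : ℚ) : ℝ) = 0 := by
        push_cast
        rw [← hkq]; linarith [hab]
      have := Rat.cast_injective (α := ℝ) (by rwa [Rat.cast_zero] : ((q ^ 2 - a * q - b : ℚ) : ℝ) = ((0 : ℚ) : ℝ))
      linarith [this]
    have hden := rat_root_int a b q hq2
    have hqz : (q : ℝ) = (q.num : ℝ) := by
      rw [← Rat.num_div_den q, hden]; push_cast; simp
    -- b/k = k - a is an integer
    have hbk : (b : ℝ) / k = ((q.num - a : ℤ) : ℝ) := by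
      have hk2 : k = (a : ℝ) + (b : ℝ) / k := by
        field_simp; linarith [hab]
      push_cast
      rw [← hqz, ← hkq]; linarith [hk2]
    rw [hx, sub_zero, hbk]
    have hL : (m : ℝ) * k = ((m * q.num : ℤ) : ℝ) := by
      rw [hkq, hqz]; push_cast; ring
    have hR : (i : ℝ) * ((q.num - a : ℤ) : ℝ) = (((i : ℤ) * (q.num - a) : ℤ) : ℝ) := by
      push_cast; ring
    rw [hL, hR, Int.fract_intCast, Int.fract_intCast]
  · -- n·k is not an integer: ⌈n·k⌉ = n·k + 1 - frac(n·k)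
    have hceil : (⌈(n : ℝ) * k⌉ : ℝ) = (n : ℝ) * k + 1 - Int.fract ((n : ℝ) * k) := by
      have := Int.ceil_sub_self_eq hx
      linarith
    rw [hstep, Int.fract_intCast_add]
    have hmb : (m : ℝ) * ((b : ℝ) / k) =
        ((n * b : ℤ) : ℝ) + ((i : ℝ) - Int.fract ((n : ℝ) * k)) * ((b : ℝ) / k) := by
      have hmr : (m : ℝ) = (n : ℝ) * k + (i : ℝ) - Int.fract ((n : ℝ) * k) := by
        rw [hm]; push_cast; linarith [hceil]
      rw [hmr]
      push_cast
      field_simp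
      ring
    rw [hmb, Int.fract_intCast_add]
end

section
/- Let k = (1 + sqrt 5)/2 be the golden ratio. Then the number r_d of nodes at depth d in the k-descending tree equals the d-th Fibonacci number shifted: r_0 = 1, r_1 = 1, and r_d = r_{d-1} + r_{d-2} for d ≥ 2, i.e., r_d = Fib(d+1). -/
namespace GT

local notation "φ" => (1 + Real.sqrt 5) / 2
local notation "ψ" => (1 - Real.sqrt 5) / 2

lemma s_sq : Real.sqrt 5 ^ 2 = 5 := Real.sq_sqrt (by norm_num)
lemma s_gt : 2 < Real.sqrt 5 := by nlinarith [s_sq, Real.sqrt_nonneg 5]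
lemma s_lt : Real.sqrt 5 < 3 := by nlinarith [s_sq, Real.sqrt_nonneg 5]

lemma psi_neg : (ψ:ℝ) < 0 := by nlinarith [s_gt]
lemma psi_gt : (-1:ℝ) < ψ := by nlinarith [s_lt]

lemma fib_phi (m : ℕ) : (Nat.fib (m+1) : ℝ) = Nat.fib m * φ + ψ^m := by
  induction m using Nat.twoStepInduction with
  | zero => simp
  | one => simp
  | more m ih1 ih2 =>
    have h2 : ((1 - Real.sqrt 5)/2:ℝ)^2 = (1 - Real.sqrt 5)/2 + 1 := by nlinarith [s_sq]
    have hψ : ((1 - Real.sqrt 5)/2:ℝ)^(m+2)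
        = ((1 - Real.sqrt 5)/2)^m + ((1 - Real.sqrt 5)/2)^(m+1) := by
      rw [pow_add, h2]; ring
    push_cast [Nat.fib_add_two] at ih1 ih2 ⊢
    linarith [ih1, ih2, hψ]

lemma abs_psi : |(ψ:ℝ)| = (Real.sqrt 5 - 1) / 2 := by
  rw [abs_of_neg psi_neg]; ring

lemma psi_pow_bounds (j : ℕ) (hj : 1 ≤ j) : (ψ:ℝ) ≤ ψ^j ∧ (ψ:ℝ)^j ≤ (Real.sqrt 5 - 1)/2 := by
  have h1 : |(ψ:ℝ)^j| ≤ |(ψ:ℝ)| := by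
    rw [abs_pow]
    calc |(ψ:ℝ)|^j ≤ |(ψ:ℝ)|^1 := by
          apply pow_le_pow_of_le_one (abs_nonneg _) _ hj
          rw [abs_psi]; nlinarith [s_lt]
      _ = |(ψ:ℝ)| := pow_one _
  have h2 := abs_le.mp h1
  rw [abs_psi] at h2
  constructor
  · have : (ψ:ℝ) = -((Real.sqrt 5 - 1)/2) := by ring
    linarith [h2.1]
  · exact h2.2

lemma psi_pow_lt_sq (j : ℕ) (hj : 3 ≤ j) : (ψ:ℝ)^j < 2 - (1 + Real.sqrt 5)/2 := by
  have habs : |(ψ:ℝ)| < 1 := by rw [abs_psi]; nlinarith [s_lt]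
  have h1 : |(ψ:ℝ)^j| ≤ |(ψ:ℝ)|^3 := by
    rw [abs_pow]
    exact pow_le_pow_of_le_one (abs_nonneg _) habs.le hj
  have hsq : |(ψ:ℝ)|^2 = 2 - (1 + Real.sqrt 5)/2 := by
    rw [abs_psi]; nlinarith [s_sq]
  have hsqpos : (0:ℝ) < |(ψ:ℝ)|^2 := by rw [hsq]; nlinarith [s_lt]
  have h3 : |(ψ:ℝ)|^3 < |(ψ:ℝ)|^2 := by
    have : |(ψ:ℝ)|^3 = |(ψ:ℝ)| * |(ψ:ℝ)|^2 := by ring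
    rw [this]
    nlinarith [hsqpos, habs, abs_nonneg ((ψ:ℝ))]
  calc (ψ:ℝ)^j ≤ |(ψ:ℝ)^j| := le_abs_self _
    _ ≤ |(ψ:ℝ)|^3 := h1
    _ < |(ψ:ℝ)|^2 := h3
    _ = _ := hsq

lemma phi_pos : (0:ℝ) < φ := by nlinarith [s_gt]

lemma floor1 (m : ℕ) : ⌊((Nat.fib (m+2) : ℝ) - 1)/φ⌋ = (Nat.fib (m+1) : ℤ) - 1 := by
  have hfib := fib_phi (m+1)  -- Fib(m+2) = Fib(m+1)*φ + ψ^(m+1)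
  obtain ⟨hb1, hb2⟩ := psi_pow_bounds (m+1) (by omega)
  have hb2' : (ψ:ℝ)^(m+1) < 1 := lt_of_le_of_lt hb2 (by nlinarith [s_lt])
  rw [Int.floor_eq_iff]
  constructor
  · rw [le_div_iff₀ phi_pos]; push_cast; nlinarith [hb1, s_gt]
  · rw [div_lt_iff₀ phi_pos]; push_cast; nlinarith [hb2']

lemma floor2 (m : ℕ) : ⌊((Nat.fib (m+4) : ℝ) - 2)/φ⌋ = (Nat.fib (m+3) : ℤ) - 2 := by
  have hfib := fib_phi (m+3)  -- Fib(m+4) = Fib(m+3)*φ + ψ^(m+3)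
  obtain ⟨hb1, _⟩ := psi_pow_bounds (m+3) (by omega)
  have hb3 := psi_pow_lt_sq (m+3) (by omega)
  rw [Int.floor_eq_iff]
  constructor
  · rw [le_div_iff₀ phi_pos]; push_cast; nlinarith [hb1, s_gt]
  · rw [div_lt_iff₀ phi_pos]; push_cast; nlinarith [hb3]

lemma par_mono {a b : ℕ} (h : a ≤ b) : par φ a ≤ par φ b := by
  unfold par
  apply Int.toNat_le_toNat
  apply Int.floor_le_floor
  gcongr


lemma fib_ge_one (m : ℕ) : 1 ≤ Nat.fib (m+2) := Nat.fib_pos.mpr (by omega)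
lemma fib_ge_two (m : ℕ) : 2 ≤ Nat.fib (m+3) := by
  have h : Nat.fib 3 ≤ Nat.fib (m+3) := Nat.fib_mono (by omega)
  simpa [show Nat.fib 3 = 2 from rfl] using h

lemma par_fib1 (m : ℕ) : par φ (Nat.fib (m+2) - 1) = Nat.fib (m+1) - 1 := by
  unfold par
  have h1 := fib_ge_one m
  have hcast : ((Nat.fib (m+2) - 1 : ℕ) : ℝ) = (Nat.fib (m+2) : ℝ) - 1 := by
    push_cast [Nat.cast_sub h1]; ring
  rw [hcast, floor1]
  omega

lemma par_fib2 (m : ℕ) : par φ (Nat.fib (m+4) - 2) = Nat.fib (m+3) - 2 := by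
  unfold par
  have h1 := fib_ge_two (m+1)
  have hcast : ((Nat.fib (m+4) - 2 : ℕ) : ℝ) = (Nat.fib (m+4) : ℝ) - 2 := by
    push_cast [Nat.cast_sub h1]; ring
  rw [hcast, floor2]
  omega

lemma iter_eq_zero (d : ℕ) : ∀ n : ℕ, ((par φ)^[d] n = 0 ↔ n + 1 < Nat.fib (d+3)) := by
  induction d with
  | zero =>
    intro n
    simp only [Function.iterate_zero, id_eq]
    have : Nat.fib (0+3) = 2 := rfl
    omega
  | succ d ih =>
    intro n
    rw [Function.iterate_succ_apply, ih]
    have h3 := fib_ge_two d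
    have h4 := fib_ge_two (d+1)
    simp only [show d+1+3 = d+4 from by omega] at *
    constructor
    · intro h
      by_contra hc
      push_neg at hc
      have hle : Nat.fib (d+4) - 1 ≤ n := by omega
      have := par_mono hle
      rw [show Nat.fib (d+4) - 1 = Nat.fib ((d+2)+2) - 1 from by norm_num, par_fib1 (d+2),
        show (d+2)+1 = d+3 from by omega] at this
      omega
    · intro h
      have hle : n ≤ Nat.fib (d+4) - 2 := by omega
      have := par_mono hle
      rw [par_fib2 d] at this
      omega

lemma fib_lower (m : ℕ) : m + 1 ≤ Nat.fib (m+2) := by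
  induction m with
  | zero => simp
  | succ m ih =>
    have h1 : 1 ≤ Nat.fib (m+1) := Nat.fib_pos.mpr (by omega)
    have h2 : Nat.fib (m+3) = Nat.fib (m+1) + Nat.fib (m+2) := by
      have := Nat.fib_add_two (n := m+1)
      simpa [show m+1+2 = m+3 from by omega, show m+1+1 = m+2 from by omega] using this
    show m + 2 ≤ Nat.fib (m+3)
    omega

lemma depth_eq (d n : ℕ) :
    depth φ n = d ↔ Nat.fib (d+2) ≤ n + 1 ∧ n + 1 < Nat.fib (d+3) := by
  have hset : {e : ℕ | (par φ)^[e] n = 0} = {e : ℕ | n + 1 < Nat.fib (e+3)} := by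
    ext e; exact iter_eq_zero e n
  have hne : {e : ℕ | n + 1 < Nat.fib (e+3)}.Nonempty := by
    refine ⟨n, ?_⟩
    have h1 := fib_lower (n+1)
    have h2 : Nat.fib (n+3) ≤ Nat.fib (n+3) := le_rfl
    simp only [Set.mem_setOf_eq]
    have : Nat.fib (n+1+2) = Nat.fib (n+3) := by norm_num
    omega
  unfold depth
  rw [hset]
  constructor
  · intro h
    have hmem : d ∈ {e : ℕ | n + 1 < Nat.fib (e+3)} := h ▸ Nat.sInf_mem hne
    refine ⟨?_, hmem⟩
    rcases Nat.eq_zero_or_pos d with hd | hd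
    · subst hd
      have : Nat.fib (0+2) = 1 := rfl
      omega
    · have hlt : d - 1 < sInf {e : ℕ | n + 1 < Nat.fib (e+3)} := by omega
      have hnot := Nat.notMem_of_lt_sInf hlt
      simp only [Set.mem_setOf_eq, not_lt] at hnot
      have : Nat.fib (d-1+3) = Nat.fib (d+2) := by congr 1; omega
      omega
  · rintro ⟨h1, h2⟩
    apply le_antisymm
    · exact Nat.sInf_le h2
    · apply le_csInf hne
      intro e he
      simp only [Set.mem_setOf_eq] at he
      by_contra hc
      push_neg at hc
      have : Nat.fib (e+3) ≤ Nat.fib (d+2) := Nat.fib_mono (by omega)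
      omega

lemma row_eq (d : ℕ) : row φ d = Nat.fib (d+1) := by
  have h2 := fib_ge_one d
  have h3 := fib_ge_two d
  have hrec : Nat.fib (d+3) = Nat.fib (d+1) + Nat.fib (d+2) := by
    have := Nat.fib_add_two (n := d+1)
    simpa [show d+1+2 = d+3 from by omega, show d+1+1 = d+2 from by omega] using this
  unfold row
  have hs : {n : ℕ | depth φ n = d}
      = ↑(Finset.Ico (Nat.fib (d+2) - 1) (Nat.fib (d+3) - 1)) := by
    ext n
    simp only [Set.mem_setOf_eq, Finset.coe_Ico, Set.mem_Ico, depth_eq]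
    omega
  rw [hs, Set.ncard_coe_finset, Nat.card_Ico]
  omega

end GT

/-- For `k = (1 + √5)/2` the golden ratio, the row lengths of the `k`-descending tree
are the Fibonacci numbers: `r_0 = 1`, `r_1 = 1`, `r_d = r_{d-1} + r_{d-2}` for `d ≥ 2`,
i.e. `r_d = Fib (d+1)`. -/
theorem stmt_16 (k : ℝ) (hk : k = (1 + Real.sqrt 5) / 2) :
    row k 0 = 1 ∧ row k 1 = 1 ∧
      (∀ d : ℕ, 2 ≤ d → row k d = row k (d - 1) + row k (d - 2)) ∧
      ∀ d : ℕ, row k d = Nat.fib (d + 1) := by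
  subst hk
  have hr : ∀ d, row ((1 + Real.sqrt 5) / 2) d = Nat.fib (d + 1) := GT.row_eq
  refine ⟨by simpa using hr 0, by simpa using hr 1, ?_, hr⟩
  intro d hd
  obtain ⟨e, rfl⟩ : ∃ e, d = e + 2 := ⟨d - 2, by omega⟩
  rw [hr, show e + 2 - 1 = e + 1 from by omega, show e + 2 - 2 = e from by omega, hr, hr]
  have h := Nat.fib_add_two (n := e + 1)
  simp only [show e + 1 + 2 = e + 2 + 1 from by omega] at h
  omega
end
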